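/- arXiv:2208.01494 — 5 statements merged into one kernel-verified Lean document; each statement's English description precedes it below -/
import Mathlib

section
/- If the Page-CUSUM statistic S_T with parameter μ > 1 satisfies S_T ≥ k²/2 for some k, then there exists an interval [τ, T] whose generalized likelihood ratio statistic 2(T−τ+1)λ·g(x̄_{τ:T}/λ) is at least k², where g(x) = x log x − (x−1). -/
open Finset

lemma key_ineq (a m : ℝ) (ha : 0 < a) (hm : 0 < m) :
    a - m ≤ a * (Real.log a - Real.log m) := by
  have h := Real.log_le_sub_one_of_pos (div_pos hm ha)
  rw [Real.log_div hm.ne' ha.ne'] at h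
  have h2 := mul_le_mul_of_nonneg_left h ha.le
  have h3 : a * (m / a - 1) = m - a := by field_simp
  nlinarith [h2]

/-- If the Page-CUSUM statistic `S T` with parameter `μ > 1` satisfies
`S T ≥ k²/2`, then some interval `[τ, T]` has generalized likelihood ratio statistic
(equal to `2(T−τ+1)λ·g(x̄_{τ:T}/λ)` when `x̄_{τ:T} > λ`, and 0 otherwise) at least `k²`. -/
theorem stmt4 (T : ℕ) (hT : 1 ≤ T) (x : ℕ → ℝ) (lam μ k : ℝ)
    (hlam : 0 < lam) (hμ : 1 < μ)
    (g : ℝ → ℝ) (hg : ∀ y : ℝ, g y = y * Real.log y - (y - 1))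
    (xbar : ℕ → ℝ)
    (hxbar : ∀ τ, xbar τ = (∑ t ∈ Finset.Icc τ T, x t) / ((T : ℝ) - τ + 1))
    (GLR : ℕ → ℝ)
    (hGLR : ∀ τ, GLR τ =
      if lam < xbar τ then 2 * ((T : ℝ) - τ + 1) * lam * g (xbar τ / lam) else 0)
    (S : ℕ → ℝ)
    (hS : ∀ N : ℕ, S N = (Finset.Icc 1 (N + 1)).sup'
        (Finset.nonempty_Icc.mpr (Nat.le_add_left 1 N))
        (fun τ => ∑ t ∈ Finset.Icc τ N, (x t * Real.log μ - lam * (μ - 1))))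
    (hsig : k ^ 2 / 2 ≤ S T) :
    ∃ τ ∈ Finset.Icc 1 T, k ^ 2 ≤ GLR τ := by
  have hGLRnn : ∀ τ, τ ≤ T → 0 ≤ GLR τ := by
    intro τ hτ
    rw [hGLR τ]
    split_ifs with h
    · have hn : (1:ℝ) ≤ (T : ℝ) - τ + 1 := by
        have : (τ:ℝ) ≤ T := by exact_mod_cast hτ
        linarith
      have hy0 : 0 < xbar τ / lam := div_pos (hlam.trans h) hlam
      have hk := key_ineq (xbar τ / lam) 1 hy0 one_pos
      rw [Real.log_one] at hk
      have hg0 : 0 ≤ g (xbar τ / lam) := by rw [hg]; linarith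
      positivity
    · exact le_refl 0
  obtain ⟨τ₀, hτmem, hτeq⟩ := Finset.exists_mem_eq_sup'
    (Finset.nonempty_Icc.mpr (Nat.le_add_left 1 T))
    (fun τ => ∑ t ∈ Finset.Icc τ T, (x t * Real.log μ - lam * (μ - 1)))
  rw [hS T, hτeq] at hsig
  obtain ⟨hτ1, hτT1⟩ := Finset.mem_Icc.mp hτmem
  by_cases hτ : τ₀ ≤ T
  · -- main case
    refine ⟨τ₀, Finset.mem_Icc.mpr ⟨hτ1, hτ⟩, ?_⟩
    set n : ℝ := (T : ℝ) - τ₀ + 1 with hn_def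
    have hτR : (τ₀:ℝ) ≤ T := by exact_mod_cast hτ
    have hn1 : (1:ℝ) ≤ n := by simp [hn_def]; linarith
    have hn0 : (0:ℝ) < n := by linarith
    have hcard : ((Finset.Icc τ₀ T).card : ℝ) = n := by
      rw [Nat.card_Icc]
      have : T + 1 - τ₀ = T + 1 - τ₀ := rfl
      push_cast [Nat.cast_sub (by omega : τ₀ ≤ T + 1)]
      ring
    have hsum : (∑ t ∈ Finset.Icc τ₀ T, (x t * Real.log μ - lam * (μ - 1)))
        = (∑ t ∈ Finset.Icc τ₀ T, x t) * Real.log μ - n * (lam * (μ - 1)) := by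
      rw [Finset.sum_sub_distrib, ← Finset.sum_mul, Finset.sum_const, nsmul_eq_mul, hcard]
    have hSx : (∑ t ∈ Finset.Icc τ₀ T, x t) = xbar τ₀ * n := by
      rw [hxbar τ₀]
      field_simp
      rw [hn_def, mul_div_assoc, div_self (ne_of_gt (by linarith : (0:ℝ) < (T:ℝ) - τ₀ + 1)), mul_one]
    rw [hsum, hSx] at hsig
    -- hsig : k^2/2 ≤ xbar τ₀ * n * log μ - n * (lam * (μ-1))
    have hlogμ : Real.log μ ≤ μ - 1 := by
      have := Real.log_le_sub_one_of_pos (by linarith : (0:ℝ) < μ); linarith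
    have hlogμpos : 0 < Real.log μ := Real.log_pos hμ
    rw [hGLR τ₀]
    split_ifs with hx
    · -- lam < xbar τ₀
      have hxb0 : 0 < xbar τ₀ := hlam.trans hx
      have hkey := key_ineq (xbar τ₀) (lam * μ) hxb0 (by positivity)
      rw [Real.log_mul hlam.ne' (by linarith : μ ≠ 0)] at hkey
      -- lam * g (xbar/lam) ≥ xbar * log μ - lam * (μ - 1)
      have hglam : xbar τ₀ * Real.log μ - lam * (μ - 1) ≤ lam * g (xbar τ₀ / lam) := by
        rw [hg, Real.log_div hxb0.ne' hlam.ne']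
        have hexp : lam * (xbar τ₀ / lam * (Real.log (xbar τ₀) - Real.log lam)
            - (xbar τ₀ / lam - 1))
            = xbar τ₀ * (Real.log (xbar τ₀) - Real.log lam) - (xbar τ₀ - lam) := by
          field_simp
        rw [hexp]
        nlinarith [hkey]
      calc k ^ 2 ≤ 2 * (n * (xbar τ₀ * Real.log μ - lam * (μ - 1))) := by nlinarith
        _ ≤ 2 * (n * (lam * g (xbar τ₀ / lam))) := by
            have := mul_le_mul_of_nonneg_left hglam hn0.le
            linarith
        _ = 2 * n * lam * g (xbar τ₀ / lam) := by ring
    · -- xbar τ₀ ≤ lam : sum ≤ 0, so k² ≤ 0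
      push_neg at hx
      have hterm : xbar τ₀ * Real.log μ - lam * (μ - 1) ≤ 0 := by
        have h1 : xbar τ₀ * Real.log μ ≤ lam * Real.log μ :=
          mul_le_mul_of_nonneg_right hx hlogμpos.le
        have h2 : lam * Real.log μ ≤ lam * (μ - 1) :=
          mul_le_mul_of_nonneg_left hlogμ hlam.le
        linarith
      nlinarith [hsig, sq_nonneg k, mul_nonpos_of_nonneg_of_nonpos hn0.le hterm]
  · -- τ₀ = T + 1, empty sum, so k² ≤ 0
    have hτeq' : τ₀ = T + 1 := by omega
    have : (∑ t ∈ Finset.Icc τ₀ T, (x t * Real.log μ - lam * (μ - 1))) = 0 := by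
      rw [hτeq', Finset.Icc_eq_empty (by omega), Finset.sum_empty]
    rw [this] at hsig
    refine ⟨1, Finset.mem_Icc.mpr ⟨le_refl 1, hT⟩, ?_⟩
    have := hGLRnn 1 hT
    nlinarith [sq_nonneg k]
end

section
/- For any k > 0, λ > 0 and window length h, let μ > 1 be the unique solution of 2hλ[μ log μ − (μ−1)] = k². If for some t the window statistic 2hλ·g(x̄_{t+1:t+h}/λ) ≥ k² (with g(x) = x log x − (x−1) and x̄_{t+1:t+h} > λ), then the Page-CUSUM statistic S_{t+h} with parameter μ satisfies S_{t+h} ≥ k²/2. -/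
open Finset

/-- Let `μ > 1` solve `2hλ[μ log μ − (μ−1)] = k²`.  If the window
statistic `2hλ·g(x̄_{t+1:t+h}/λ)` on some window of length `h` is at least `k²`
(with `x̄_{t+1:t+h} > λ`), then the Page-CUSUM statistic with parameter `μ`
satisfies `S (t+h) ≥ k²/2`. -/
theorem stmt5 (h : ℕ) (hh : 0 < h) (lam μ k : ℝ)
    (hlam : 0 < lam) (hk : 0 < k) (hμ : 1 < μ)
    (hμeq : 2 * h * lam * (μ * Real.log μ - (μ - 1)) = k ^ 2)
    (x : ℕ → ℝ) (hx : ∀ t, 0 ≤ x t)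
    (g : ℝ → ℝ) (hg : ∀ y : ℝ, g y = y * Real.log y - (y - 1))
    (t : ℕ)
    (xbar : ℝ) (hxbar : xbar = (∑ s ∈ Finset.Icc (t + 1) (t + h), x s) / h)
    (hxbarlam : lam < xbar)
    (hwin : k ^ 2 ≤ 2 * h * lam * g (xbar / lam))
    (S : ℕ → ℝ)
    (hS : ∀ N : ℕ, S N = (Finset.Icc 1 (N + 1)).sup'
        (Finset.nonempty_Icc.mpr (Nat.le_add_left 1 N))
        (fun τ => ∑ s ∈ Finset.Icc τ N, (x s * Real.log μ - lam * (μ - 1)))) :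
    k ^ 2 / 2 ≤ S (t + h) := by
  have hG : StrictMonoOn (fun y : ℝ => y * Real.log y - (y - 1)) (Set.Ici 1) := by
    apply strictMonoOn_of_deriv_pos (convex_Ici 1)
    · exact (continuousOn_id.mul (Real.continuousOn_log.mono (by
        intro y hy; simp only [Set.mem_Ici] at hy
        simp only [Set.mem_compl_iff, Set.mem_singleton_iff]; intro hy0; simp [hy0] at hy; linarith))).sub
        (continuousOn_id.sub continuousOn_const)
    · intro y hy
      rw [interior_Ici] at hy
      have hy1 : (1:ℝ) < y := hy
      have hd : HasDerivAt (fun y : ℝ => y * Real.log y - (y - 1)) (Real.log y) y := by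
        have h1 : HasDerivAt (fun y : ℝ => y * Real.log y) (1 * Real.log y + y * y⁻¹) y :=
          (hasDerivAt_id y).mul (Real.hasDerivAt_log (by linarith))
        have h2 : HasDerivAt (fun y : ℝ => y - 1) 1 y := (hasDerivAt_id y).sub_const 1
        have h3 := h1.sub h2
        have h4 : 1 * Real.log y + y * y⁻¹ - 1 = Real.log y := by
          rw [mul_inv_cancel₀ (ne_of_gt (by linarith : (0:ℝ) < y))]; ring
        rw [h4] at h3
        exact h3
      rw [hd.deriv]
      exact Real.log_pos hy1
  have hhr : (0:ℝ) < h := Nat.cast_pos.mpr hh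
  have h2hl : (0:ℝ) < 2 * h * lam := by positivity
  have hμle : μ ≤ xbar / lam := by
    by_contra hc
    push_neg at hc
    have ha1 : (1:ℝ) < xbar / lam := (one_lt_div hlam).mpr hxbarlam
    have hlt := hG (Set.mem_Ici.mpr ha1.le) (Set.mem_Ici.mpr hμ.le) hc
    simp only at hlt
    rw [hg] at hwin
    nlinarith [mul_lt_mul_of_pos_left hlt h2hl]
  have hxm : lam * μ ≤ xbar := by
    rw [le_div_iff₀ hlam] at hμle; linarith
  have hlog : 0 < Real.log μ := Real.log_pos hμ
  have hcard : (Finset.Icc (t+1) (t+h)).card = h := by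
    rw [Nat.card_Icc]; omega
  have hsum : ∑ s ∈ Finset.Icc (t+1) (t+h), x s = h * xbar := by
    rw [hxbar]; field_simp
  have hkey : k ^ 2 / 2 ≤ ∑ s ∈ Finset.Icc (t+1) (t+h),
      (x s * Real.log μ - lam * (μ - 1)) := by
    rw [Finset.sum_sub_distrib, ← Finset.sum_mul, hsum, Finset.sum_const, hcard,
      nsmul_eq_mul]
    have heq : k ^ 2 / 2 = h * lam * (μ * Real.log μ - (μ - 1)) := by linarith
    rw [heq]
    nlinarith [mul_le_mul_of_nonneg_right hxm hlog.le]
  rw [hS]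
  have hmem : t + 1 ∈ Finset.Icc 1 (t + h + 1) := Finset.mem_Icc.mpr ⟨by omega, by omega⟩
  exact le_trans hkey (Finset.le_sup' (fun τ => ∑ s ∈ Finset.Icc τ (t + h), (x s * Real.log μ - lam * (μ - 1))) hmem)
end

section
/- Let C_i(μ) = a_i log μ − b_i(μ−1) and C_j(μ) = a_j log μ − b_j(μ−1) with a_i > b_i > b_j > 0 and a_j > b_j, and suppose the difference curve D(μ) = (a_i − a_j) log μ − (b_i − b_j)(μ−1) is positive somewhere on (1,∞) (i.e., a_i − a_j > b_i − b_j > 0). Then [C_i(μ)]⁺ ≥ [C_j(μ)]⁺ for all μ ∈ [1,∞) if and only if a_j/b_j ≤ a_i/b_i. -/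
/-!
On the ray `log μ = c (μ - 1)` with `0 < c < 1` the curve `a log μ - b (μ - 1)` equals
`(a c - b)(μ - 1)`, so its sign and its comparison with a second curve are decided by linear
inequalities in `c`. If `a_j/b_j > a_i/b_i`, a slope `c` strictly between `b_j/a_j` and
`(b_i - b_j)/(a_i - a_j)` gives a point where `C_j` is positive and exceeds `C_i`. Conversely,
if `a_j/b_j ≤ a_i/b_i` then `b_j C_i - b_i C_j = (a_i b_j - a_j b_i) log μ ≥ 0`, so wherever
`C_j > 0` we get `C_i ≥ (b_i/b_j) C_j > C_j`.
-/

open Real Set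

noncomputable def logCurve (a b μ : ℝ) : ℝ := a * log μ - b * (μ - 1)

lemma exists_log_eq_mul_sub_one {c : ℝ} (hc₀ : 0 < c) (hc₁ : c < 1) :
    ∃ μ, 1 < μ ∧ log μ = c * (μ - 1) := by
  set f : ℝ → ℝ := fun μ => log μ - c * (μ - 1)
  have hc_inv : 1 < c⁻¹ := one_lt_inv_iff₀.mpr ⟨hc₀, hc₁⟩
  have hle : c⁻¹ ≤ (4 / c) ^ 2 := by
    rw [div_pow, inv_le_iff_one_le_mul₀ hc₀]
    field_simp
    nlinarith
  have hf_left : 0 < f c⁻¹ := by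
    have := log_lt_sub_one_of_pos hc₀ hc₁.ne
    have hc : c * (c⁻¹ - 1) = 1 - c := by field_simp
    simp only [f, log_inv, hc]
    linarith
  have hf_right : f ((4 / c) ^ 2) < 0 := by
    have hlog : log (4 / c) ≤ 4 / c - 1 := log_le_sub_one_of_pos (by positivity)
    have hc : c * ((4 / c) ^ 2 - 1) - 2 * (4 / c - 1) = 8 / c + 2 - c := by
      field_simp
      ring
    have : 0 < 8 / c + 2 - c := by
      have : 0 < 8 / c := by positivity
      linarith
    simp only [f, log_pow]
    push_cast
    linarith
  have hcont : ContinuousOn f (Icc c⁻¹ ((4 / c) ^ 2)) := by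
    fun_prop (disch := intro x hx; exact (inv_pos.mpr hc₀ |>.trans_le hx.1).ne')
  obtain ⟨μ, hμ, hfμ⟩ :=
    intermediate_value_Icc' hle hcont ⟨hf_right.le, hf_left.le⟩
  exact ⟨μ, hc_inv.trans_le hμ.1, sub_eq_zero.mp hfμ⟩

lemma logCurve_eq_of_log_eq {a b c μ : ℝ} (h : log μ = c * (μ - 1)) :
    logCurve a b μ = (a * c - b) * (μ - 1) := by
  rw [logCurve, h]
  ring

lemma logCurve_lt_of_div_le {a b a' b' μ : ℝ} (hb : 0 < b) (hbb' : b < b')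
    (hdiv : a / b ≤ a' / b') (hμ : 1 ≤ μ) (hpos : 0 < logCurve a b μ) :
    logCurve a b μ < logCurve a' b' μ := by
  have hcross : a * b' ≤ a' * b := (div_le_div_iff₀ hb (hb.trans hbb')).mp hdiv
  have hkey : b' * logCurve a b μ ≤ b * logCurve a' b' μ := by
    have : 0 ≤ (a' * b - a * b') * log μ :=
      mul_nonneg (sub_nonneg.mpr hcross) (log_nonneg hμ)
    simp only [logCurve]
    linarith
  nlinarith

lemma max_logCurve_le_of_div_le {a b a' b' μ : ℝ} (hb : 0 < b) (hbb' : b < b')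
    (hdiv : a / b ≤ a' / b') (hμ : 1 ≤ μ) :
    max (logCurve a b μ) 0 ≤ max (logCurve a' b' μ) 0 := by
  rcases le_or_gt (logCurve a b μ) 0 with hnonpos | hpos
  · exact max_le (hnonpos.trans (le_max_right _ _)) (le_max_right _ _)
  · rw [max_eq_left hpos.le]
    exact (logCurve_lt_of_div_le hb hbb' hdiv hμ hpos).le.trans (le_max_left _ _)

lemma exists_logCurve_pos_of_div_lt {a b a' b' : ℝ} (hb : 0 < b) (hba : b < a)
    (hbb' : b < b') (hslope : b' - b < a' - a) (hdiv : a' / b' < a / b) :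
    ∃ μ, 1 ≤ μ ∧ 0 < logCurve a b μ ∧ logCurve a' b' μ < logCurve a b μ := by
  have ha : 0 < a := hb.trans hba
  have hda : 0 < a' - a := (sub_pos.mpr hbb').trans hslope
  have hcross : a' * b < a * b' := (div_lt_div_iff₀ (hb.trans hbb') hb).mp hdiv
  have hratio : b / a < (b' - b) / (a' - a) := by
    rw [div_lt_div_iff₀ ha hda]
    nlinarith
  obtain ⟨c, hsc, hcr⟩ := exists_between hratio
  have hc₁ : c < 1 := hcr.trans ((div_lt_one hda).mpr hslope)
  obtain ⟨μ, hμ, hlog⟩ := exists_log_eq_mul_sub_one ((div_pos hb ha).trans hsc) hc₁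
  have hpos : 0 < a * c - b := by
    have := (div_lt_iff₀ ha).mp hsc
    linarith
  have hlt : a' * c - b' < a * c - b := by
    have := (lt_div_iff₀ hda).mp hcr
    linarith
  have hμ₀ : 0 < μ - 1 := sub_pos.mpr hμ
  refine ⟨μ, hμ.le, ?_⟩
  rw [logCurve_eq_of_log_eq hlog, logCurve_eq_of_log_eq hlog]
  exact ⟨mul_pos hpos hμ₀, mul_lt_mul_of_pos_right hlt hμ₀⟩

theorem stmt8_general (ai bi aj bj : ℝ)
    (hbj : 0 < bj) (hbij : bj < bi) (haj : bj < aj)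
    (hD : bi - bj < ai - aj)
    (Ci Cj : ℝ → ℝ)
    (hCi : ∀ μ : ℝ, Ci μ = ai * Real.log μ - bi * (μ - 1))
    (hCj : ∀ μ : ℝ, Cj μ = aj * Real.log μ - bj * (μ - 1)) :
    (∀ μ : ℝ, 1 ≤ μ → max (Cj μ) 0 ≤ max (Ci μ) 0) ↔ aj / bj ≤ ai / bi := by
  obtain rfl : Ci = logCurve ai bi := funext hCi
  obtain rfl : Cj = logCurve aj bj := funext hCj
  refine ⟨fun hdom => ?_, fun hdiv μ hμ => max_logCurve_le_of_div_le hbj hbij hdiv hμ⟩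
  by_contra! hdiv
  obtain ⟨μ, hμ, hpos, hlt⟩ := exists_logCurve_pos_of_div_lt hbj haj hbij hD hdiv
  have := hdom μ hμ
  rw [max_eq_left hpos.le] at this
  exact (this.trans_lt (max_lt hlt hpos)).false

/-- With `C_i(μ) = a_i log μ − b_i(μ−1)`, `C_j(μ) = a_j log μ − b_j(μ−1)`,
`a_i > b_i > b_j > 0`, `a_j > b_j`, and the difference curve positive somewhere on
`(1,∞)` (i.e. `a_i − a_j > b_i − b_j > 0`), the curve `C_i` dominates `C_j`
(`[C_i(μ)]⁺ ≥ [C_j(μ)]⁺` for all `μ ≥ 1`) iff `a_j/b_j ≤ a_i/b_i`. -/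
theorem stmt8 (ai bi aj bj : ℝ)
    (hbj : 0 < bj) (hbij : bj < bi) (hbi : bi < ai) (haj : bj < aj)
    (hD : bi - bj < ai - aj) (hDpos : 0 < bi - bj)
    (Ci Cj : ℝ → ℝ)
    (hCi : ∀ μ : ℝ, Ci μ = ai * Real.log μ - bi * (μ - 1))
    (hCj : ∀ μ : ℝ, Cj μ = aj * Real.log μ - bj * (μ - 1)) :
    (∀ μ : ℝ, 1 ≤ μ → max (Cj μ) 0 ≤ max (Ci μ) 0) ↔ aj / bj ≤ ai / bi :=
  stmt8_general ai bi aj bj hbj hbij haj hD Ci Cj hCi hCj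
end

section
/- Let x_1,...,x_T be real data with partial sums Z_t = Σ_{s≤t} x_s, Z_0 = 0, and λ > 0. A candidate start point τ' is in the candidate set 𝔍_T (i.e., there exists μ > 1 where the curve started at τ' strictly exceeds all other curves and 0) if and only if: (i) for all τ'' with τ' ≤ τ'' ≤ T, x̄_{τ':τ''} > λ, and (ii) for all τ < τ' ≤ τ'', x̄_{τ:τ'−1} < x̄_{τ':τ''}. -/
open Finset

private lemma sum_split (x : ℕ → ℝ) {a b c : ℕ} (hab : a ≤ b + 1) (hbc : b ≤ c) :
    ∑ t ∈ Finset.Icc a c, x t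
      = ∑ t ∈ Finset.Icc a b, x t + ∑ t ∈ Finset.Icc (b + 1) c, x t := by
  rw [← Finset.Ico_add_one_right_eq_Icc, ← Finset.Ico_add_one_right_eq_Icc, ← Finset.Ico_add_one_right_eq_Icc]
  exact (Finset.sum_Ico_consecutive x hab (by omega)).symm

private lemma div_compare {lam mu lg S L : ℝ} (hlg : 0 < lg) (hL : 0 < L) :
    lam * (mu - 1) / lg < S / L ↔ lam * L * (mu - 1) < S * lg := by
  rw [div_lt_div_iff₀ hlg hL]
  constructor <;> intro h <;> linarith [h]

private lemma div_compare' {lam mu lg S L : ℝ} (hlg : 0 < lg) (hL : 0 < L) :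
    S / L < lam * (mu - 1) / lg ↔ S * lg < lam * L * (mu - 1) := by
  rw [div_lt_div_iff₀ hL hlg]
  constructor <;> intro h <;> linarith [h]

private lemma log_lb {x : ℝ} (hx : 0 < x) : 1 - 1 / x ≤ Real.log x := by
  have h := Real.log_le_sub_one_of_pos (inv_pos.mpr hx)
  rw [Real.log_inv] at h
  rw [one_div]
  linarith

private lemma exists_mu {lam c : ℝ} (hlam : 0 < lam) (hc : lam < c) :
    ∃ μ : ℝ, 1 < μ ∧ lam * (μ - 1) / Real.log μ = c := by
  have hc0 : 0 < c := hlam.trans hc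
  set r : ℝ := c / lam with hr
  have hr1 : 1 < r := (one_lt_div hlam).mpr hc
  have hlr : lam * r = c := by
    rw [hr]; field_simp
  set a : ℝ := (1 + r) / 2 with ha
  set b : ℝ := (2 * r) ^ 2 with hb
  have ha1 : 1 < a := by rw [ha]; linarith
  have hab : a ≤ b := by rw [ha, hb]; nlinarith
  have hb1 : 1 < b := lt_of_lt_of_le ha1 hab
  have hla : 0 < Real.log a := Real.log_pos ha1
  have hlb : 0 < Real.log b := Real.log_pos hb1
  have hga : lam * (a - 1) / Real.log a < c := by
    rw [div_lt_iff₀ hla]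
    have h1 : 1 - 1 / a ≤ Real.log a := log_lb (by linarith)
    have h2 : a < r := by rw [ha]; linarith
    have h3 : lam * a < c := by nlinarith
    have ha' : a * (1 / a) = 1 := by field_simp
    nlinarith [mul_pos hc0 hla]
  have hgb : c < lam * (b - 1) / Real.log b := by
    rw [lt_div_iff₀ hlb]
    have hs : (0:ℝ) < 2 * r := by linarith
    have hlog2 : Real.log b = 2 * Real.log (2 * r) := by
      rw [hb, Real.log_pow]; norm_num
    have h1 : Real.log (2 * r) ≤ 2 * r - 1 := Real.log_le_sub_one_of_pos hs
    have h2 : lam * (2 * r) = 2 * c := by linarith [hlr]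
    rw [hlog2, hb]
    nlinarith [hc0, hr1, hlam]
  have hcont : ContinuousOn (fun μ : ℝ => lam * (μ - 1) / Real.log μ) (Set.Icc a b) := by
    apply ContinuousOn.div
    · exact (continuous_const.mul (continuous_id.sub continuous_const)).continuousOn
    · exact Real.continuousOn_log.mono (fun y hy => by
        simp only [Set.mem_compl_iff, Set.mem_singleton_iff]
        have : 1 < y := lt_of_lt_of_le ha1 hy.1
        linarith)
    · intro y hy
      exact ne_of_gt (Real.log_pos (lt_of_lt_of_le ha1 hy.1))
  have hmem : c ∈ Set.Icc ((fun μ : ℝ => lam * (μ - 1) / Real.log μ) a)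
      ((fun μ : ℝ => lam * (μ - 1) / Real.log μ) b) := ⟨le_of_lt hga, le_of_lt hgb⟩
  obtain ⟨μ, hμmem, hμeq⟩ := intermediate_value_Icc hab hcont hmem
  exact ⟨μ, lt_of_lt_of_le ha1 hμmem.1, hμeq⟩

/-- A start point `τ'` is a candidate at time `T` (some `μ > 1` makes
its curve strictly exceed all other curves and 0) iff (i) every mean
`x̄_{τ':τ''}` for `τ' ≤ τ'' ≤ T` exceeds `λ`, and (ii) for all `τ < τ' ≤ τ''`,
`x̄_{τ:τ'−1} < x̄_{τ':τ''}`. -/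
theorem stmt11 (T : ℕ) (hT : 1 ≤ T) (x : ℕ → ℝ) (lam : ℝ) (hlam : 0 < lam)
    (xbar : ℕ → ℕ → ℝ)
    (hxbar : ∀ a b : ℕ, xbar a b = (∑ t ∈ Finset.Icc a b, x t) / ((b : ℝ) - a + 1))
    (C : ℕ → ℝ → ℝ)
    (hC : ∀ (τ : ℕ) (μ : ℝ), C τ μ =
      (∑ t ∈ Finset.Icc τ T, x t) * Real.log μ - lam * ((T : ℝ) - τ + 1) * (μ - 1))
    (τ' : ℕ) (hτ' : τ' ∈ Finset.Icc 1 T) :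
    (∃ μ : ℝ, 1 < μ ∧ 0 < C τ' μ ∧
        ∀ τ ∈ Finset.Icc 1 T, τ ≠ τ' → max (C τ μ) 0 < C τ' μ) ↔
    ((∀ τ'' ∈ Finset.Icc τ' T, lam < xbar τ' τ'') ∧
      (∀ τ τ'' : ℕ, 1 ≤ τ → τ < τ' → τ' ≤ τ'' → τ'' ≤ T →
        xbar τ (τ' - 1) < xbar τ' τ'')) := by
  rw [Finset.mem_Icc] at hτ'
  obtain ⟨h1τ', hτ'T⟩ := hτ'
  have key : ∀ μ : ℝ, 1 < μ →
      ((0 < C τ' μ ∧ ∀ τ ∈ Finset.Icc 1 T, τ ≠ τ' → max (C τ μ) 0 < C τ' μ) ↔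
        ((∀ b ∈ Finset.Icc τ' T, lam * (μ - 1) / Real.log μ < xbar τ' b) ∧
         (∀ a ∈ Finset.Icc 1 (τ' - 1), xbar a (τ' - 1) < lam * (μ - 1) / Real.log μ))) := by
    intro μ hμ
    have hlg : 0 < Real.log μ := Real.log_pos hμ
    -- positivity of the τ' curve
    have h0 : 0 < C τ' μ ↔ lam * (μ - 1) / Real.log μ < xbar τ' T := by
      rw [hC, hxbar, sub_pos]
      exact (div_compare hlg (by
        have : (τ' : ℝ) ≤ T := Nat.cast_le.mpr hτ'T
        linarith)).symm
    -- comparison for later start points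
    have hgt : ∀ τ : ℕ, τ' < τ → τ ≤ T →
        (C τ μ < C τ' μ ↔ lam * (μ - 1) / Real.log μ < xbar τ' (τ - 1)) := by
      intro τ ht1 ht2
      have hcast : ((τ - 1 : ℕ) : ℝ) = (τ : ℝ) - 1 := by
        rw [Nat.cast_sub (by omega : 1 ≤ τ), Nat.cast_one]
      have hsum : ∑ t ∈ Finset.Icc τ' T, x t
          = ∑ t ∈ Finset.Icc τ' (τ - 1), x t + ∑ t ∈ Finset.Icc τ T, x t := by
        have h := sum_split x (a := τ') (b := τ - 1) (c := T) (by omega) (by omega)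
        rwa [Nat.sub_add_cancel (by omega : 1 ≤ τ)] at h
      have ediff : C τ' μ - C τ μ
          = (∑ t ∈ Finset.Icc τ' (τ - 1), x t) * Real.log μ
              - lam * (((τ - 1 : ℕ) : ℝ) - τ' + 1) * (μ - 1) := by
        rw [hC, hC, hsum, hcast]; ring
      have hL : 0 < ((τ - 1 : ℕ) : ℝ) - τ' + 1 := by
        rw [hcast]
        have : (τ' : ℝ) < τ := Nat.cast_lt.mpr ht1
        linarith
      rw [hxbar, ← sub_pos, ediff, sub_pos]
      exact (div_compare hlg hL).symm
    -- comparison for earlier start points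
    have hlt : ∀ τ : ℕ, 1 ≤ τ → τ < τ' →
        (C τ μ < C τ' μ ↔ xbar τ (τ' - 1) < lam * (μ - 1) / Real.log μ) := by
      intro τ ht1 ht2
      have hcast : ((τ' - 1 : ℕ) : ℝ) = (τ' : ℝ) - 1 := by
        rw [Nat.cast_sub (by omega : 1 ≤ τ'), Nat.cast_one]
      have hsum : ∑ t ∈ Finset.Icc τ T, x t
          = ∑ t ∈ Finset.Icc τ (τ' - 1), x t + ∑ t ∈ Finset.Icc τ' T, x t := by
        have h := sum_split x (a := τ) (b := τ' - 1) (c := T) (by omega) (by omega)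
        rwa [Nat.sub_add_cancel (by omega : 1 ≤ τ')] at h
      have ediff : C τ μ - C τ' μ
          = (∑ t ∈ Finset.Icc τ (τ' - 1), x t) * Real.log μ
              - lam * (((τ' - 1 : ℕ) : ℝ) - τ + 1) * (μ - 1) := by
        rw [hC, hC, hsum, hcast]; ring
      have hL : 0 < ((τ' - 1 : ℕ) : ℝ) - τ + 1 := by
        rw [hcast]
        have : (τ : ℝ) < τ' := Nat.cast_lt.mpr ht2
        linarith
      rw [hxbar, ← sub_neg, ediff, sub_neg]
      exact (div_compare' hlg hL).symm
    constructor
    · rintro ⟨hpos, hall⟩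
      refine ⟨?_, ?_⟩
      · intro b hb
        rw [Finset.mem_Icc] at hb
        rcases eq_or_lt_of_le hb.2 with hbT | hbT
        · rw [hbT]; exact h0.mp hpos
        · have hmem : b + 1 ∈ Finset.Icc 1 T := Finset.mem_Icc.mpr ⟨by omega, by omega⟩
          have h := hall (b + 1) hmem (by omega)
          have h2 := (hgt (b + 1) (by omega) (by omega)).mp (max_lt_iff.mp h).1
          simpa using h2
      · intro a ha
        rw [Finset.mem_Icc] at ha
        have hmem : a ∈ Finset.Icc 1 T := Finset.mem_Icc.mpr ⟨ha.1, by omega⟩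
        have h := hall a hmem (by omega)
        exact (hlt a ha.1 (by omega)).mp (max_lt_iff.mp h).1
    · rintro ⟨hsuf, hpre⟩
      have hpos : 0 < C τ' μ := h0.mpr (hsuf T (Finset.mem_Icc.mpr ⟨hτ'T, le_refl T⟩))
      refine ⟨hpos, ?_⟩
      intro τ hmem hne
      rw [Finset.mem_Icc] at hmem
      rcases lt_or_gt_of_ne hne with h' | h'
      · exact max_lt ((hlt τ hmem.1 h').mpr
          (hpre τ (Finset.mem_Icc.mpr ⟨hmem.1, by omega⟩))) hpos
      · refine max_lt ((hgt τ h' hmem.2).mpr ?_) hpos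
        exact hsuf (τ - 1) (Finset.mem_Icc.mpr ⟨by omega, by omega⟩)
  constructor
  · rintro ⟨μ, hμ, hpos, hall⟩
    obtain ⟨hsuf, hpre⟩ := (key μ hμ).mp ⟨hpos, hall⟩
    have hlg : 0 < Real.log μ := Real.log_pos hμ
    have hglam : lam < lam * (μ - 1) / Real.log μ := by
      rw [lt_div_iff₀ hlg]
      have h := Real.log_lt_sub_one_of_pos (by linarith : (0:ℝ) < μ) (by linarith : μ ≠ 1)
      nlinarith
    refine ⟨?_, ?_⟩
    · intro τ'' h
      exact hglam.trans (hsuf τ'' h)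
    · intro τ τ'' h1 h2 h3 h4
      exact (hpre τ (Finset.mem_Icc.mpr ⟨h1, by omega⟩)).trans
        (hsuf τ'' (Finset.mem_Icc.mpr ⟨h3, h4⟩))
  · rintro ⟨hi, hii⟩
    have hne2 : (Finset.Icc τ' T).Nonempty := ⟨τ', Finset.mem_Icc.mpr ⟨le_refl _, hτ'T⟩⟩
    have hsne : (insert lam ((Finset.Icc 1 (τ' - 1)).image
        fun a => xbar a (τ' - 1))).Nonempty := ⟨lam, Finset.mem_insert_self _ _⟩
    set P := (insert lam ((Finset.Icc 1 (τ' - 1)).image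
        fun a => xbar a (τ' - 1))).max' hsne with hP
    set m := (Finset.Icc τ' T).inf' hne2 (fun b => xbar τ' b) with hm
    have hPm : P < m := by
      rw [hP, Finset.max'_lt_iff]
      intro y hy
      rw [hm, Finset.lt_inf'_iff]
      intro b hb
      rw [Finset.mem_Icc] at hb
      rcases Finset.mem_insert.mp hy with rfl | hy'
      · exact hi b (Finset.mem_Icc.mpr hb)
      · obtain ⟨a, ha, rfl⟩ := Finset.mem_image.mp hy'
        rw [Finset.mem_Icc] at ha
        exact hii a b ha.1 (by omega) hb.1 hb.2
    have hlamP : lam ≤ P := Finset.le_max' _ _ (Finset.mem_insert_self _ _)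
    have hlamc : lam < (P + m) / 2 := by linarith
    obtain ⟨μ, hμ, hgc⟩ := exists_mu hlam hlamc
    refine ⟨μ, hμ, ?_⟩
    have := (key μ hμ).mpr ⟨?_, ?_⟩
    · exact this
    · intro b hb
      rw [hgc]
      calc (P + m) / 2 < m := by linarith
        _ ≤ xbar τ' b := Finset.inf'_le _ hb
    · intro a ha
      rw [hgc]
      have h1 : xbar a (τ' - 1) ≤ P := by
        rw [hP]
        exact Finset.le_max' _ (xbar a (τ' - 1)) (Finset.mem_insert_of_mem
          (Finset.mem_image_of_mem (fun a => xbar a (τ' - 1)) ha))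
      linarith
end

section
/- If τ is a candidate start point at time T (τ ∈ 𝔍_T), then the index τ−1 is an extreme point of the greatest convex minorant of the sequence (Z_t − tλ)_{t=0}^T, and moreover Z_t − tλ > Z_{τ−1} − (τ−1)λ for all t with τ−1 < t ≤ T (i.e., τ−1 lies on the right-hand, increasing side of the convex minorant). -/
open Finset

/-- If `τ` is a candidate start point at time `T`, then `τ−1` is an
extreme point (vertex) of the greatest convex minorant of `(Z_t − tλ)_{t=0}^T`
(strict slope inequalities around `τ−1`), and `Z_t − tλ > Z_{τ−1} − (τ−1)λ` for all
`τ−1 < t ≤ T` (so `τ−1` lies on the right-hand side of the minorant). -/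
theorem stmt13 (T : ℕ) (hT : 1 ≤ T) (x : ℕ → ℝ) (lam : ℝ) (hlam : 0 < lam)
    (Z : ℕ → ℝ) (hZ : ∀ t : ℕ, Z t = ∑ s ∈ Finset.Icc 1 t, x s)
    (W : ℕ → ℝ) (hW : ∀ t : ℕ, W t = Z t - t * lam)
    (C : ℕ → ℝ → ℝ)
    (hC : ∀ (τ : ℕ) (μ : ℝ), C τ μ =
      (Z T - Z (τ - 1)) * Real.log μ - ((T : ℝ) - τ + 1) * lam * (μ - 1))
    (τ : ℕ) (hτ : τ ∈ Finset.Icc 1 T)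
    (hcand : ∃ μ : ℝ, 1 < μ ∧ 0 < C τ μ ∧
        ∀ τ' ∈ Finset.Icc 1 T, τ' ≠ τ → max (C τ' μ) 0 < C τ μ) :
    (∀ s u : ℕ, s < τ - 1 → τ - 1 < u → u ≤ T →
      (W (τ - 1) - W s) * ((u : ℝ) - (τ - 1 : ℕ)) <
        (W u - W (τ - 1)) * (((τ - 1 : ℕ) : ℝ) - s)) ∧
    (∀ t : ℕ, τ - 1 < t → t ≤ T → W (τ - 1) < W t) := by
  obtain ⟨μ, hμ, hpos, hmax⟩ := hcand
  simp only [Finset.mem_Icc] at hτ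
  obtain ⟨hτ1, hτT⟩ := hτ
  set k := τ - 1 with hkdef
  have hτk : τ = k + 1 := by omega
  set L := Real.log μ with hLdef
  have hL : 0 < L := Real.log_pos hμ
  have hLlt : L < μ - 1 := Real.log_lt_sub_one_of_pos (by linarith) (by linarith)
  have hτcast : (τ : ℝ) = (k : ℝ) + 1 := by rw [hτk]; push_cast; ring
  -- Key upper estimate: for k < t ≤ T
  have keyA : ∀ t : ℕ, k < t → t ≤ T →
      ((t : ℝ) - k) * (lam * (μ - 1)) < (Z t - Z k) * L := by
    intro t ht htT
    have htc : ((k : ℝ)) < (t : ℝ) := by exact_mod_cast ht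
    rcases eq_or_lt_of_le htT with rfl | hlt
    · rw [hC] at hpos
      rw [hτcast] at hpos
      nlinarith [hpos]
    · have hmem : t + 1 ∈ Finset.Icc 1 T := by simp; omega
      have hne : t + 1 ≠ τ := by omega
      have h := lt_of_le_of_lt (le_max_left (C (t+1) μ) 0) (hmax (t+1) hmem hne)
      rw [hC, hC] at h
      rw [hτcast] at h
      have h1 : t + 1 - 1 = t := by omega
      rw [h1] at h
      push_cast at h
      nlinarith [h]
  -- Key lower estimate: for s < k
  have keyB : ∀ s : ℕ, s < k →
      (Z k - Z s) * L < ((k : ℝ) - s) * (lam * (μ - 1)) := by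
    intro s hs
    have hmem : s + 1 ∈ Finset.Icc 1 T := by simp; omega
    have hne : s + 1 ≠ τ := by omega
    have h := lt_of_le_of_lt (le_max_left (C (s+1) μ) 0) (hmax (s+1) hmem hne)
    rw [hC, hC] at h
    rw [hτcast] at h
    have h1 : s + 1 - 1 = s := by omega
    rw [h1] at h
    push_cast at h
    nlinarith [h]
  constructor
  · intro s u hs hu huT
    have hA := keyA u hu huT
    have hB := keyB s hs
    have hd1 : (0:ℝ) < (k : ℝ) - s := by
      have : (s:ℝ) < k := by exact_mod_cast hs
      linarith
    have hd2 : (0:ℝ) < (u : ℝ) - k := by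
      have : (k:ℝ) < u := by exact_mod_cast hu
      linarith
    have h1 : ((Z k - Z s) * L) * ((u:ℝ) - k) <
        (((k:ℝ) - s) * (lam * (μ - 1))) * ((u:ℝ) - k) :=
      mul_lt_mul_of_pos_right hB hd2
    have h2 : (((u:ℝ) - k) * (lam * (μ - 1))) * ((k:ℝ) - s) <
        ((Z u - Z k) * L) * ((k:ℝ) - s) :=
      mul_lt_mul_of_pos_right hA hd1
    have h3 : ((Z k - Z s) * ((u:ℝ) - k)) * L < ((Z u - Z k) * ((k:ℝ) - s)) * L := by
      nlinarith [h1, h2]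
    have h4 : (Z k - Z s) * ((u:ℝ) - k) < (Z u - Z k) * ((k:ℝ) - s) :=
      (mul_lt_mul_iff_left₀ hL).mp h3
    simp only [hW]
    nlinarith [h4]
  · intro t ht htT
    have hA := keyA t ht htT
    have hd : (0:ℝ) < (t : ℝ) - k := by
      have : (k:ℝ) < t := by exact_mod_cast ht
      linarith
    simp only [hW]
    have h1 : ((t:ℝ) - k) * (lam * L) < ((t:ℝ) - k) * (lam * (μ - 1)) := by
      apply mul_lt_mul_of_pos_left _ hd
      exact mul_lt_mul_of_pos_left hLlt hlam
    have h2 : (((t:ℝ) - k) * lam) * L < (Z t - Z k) * L := by nlinarith [h1, hA]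
    have h3 : ((t:ℝ) - k) * lam < Z t - Z k := (mul_lt_mul_iff_left₀ hL).mp h2
    nlinarith [h3]
end
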